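/- Let L be a first-order language and let M₀ and M be L-structures. Then the following are equivalent: (a) player II has no winning strategy in the embedding game G(M₀, M); (b) there exists a nonempty set S of positions of G(M₀, M), closed under initial segments, such that: (i) for every σ ∈ S of even length there is some x ∈ M₀ with σ⌢x ∈ S; (ii) for every σ ∈ S of odd length and every y ∈ M, either σ⌢y is an immediate loss for player II or σ⌢y ∈ S; and (iii) S is wellfounded, i.e., S has no infinite branch. -/

import Mathlib

open FirstOrder Language Cardinal Set

universe u

/-- "There is a generic elementary embedding of `M₀` into `M`": player II has a winning
strategy in the embedding game `G(M₀, M)`, in which in round `n` player I plays `xₙ ∈ M₀` and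
player II replies `yₙ ∈ M`, and player II wins a run iff for every `n` and every formula
`φ(v₀, …, vₙ)`, `M₀ ⊨ φ(x₀, …, xₙ) ↔ M ⊨ φ(y₀, …, yₙ)`. -/
def IsGenericEmbeddable (L : FirstOrder.Language.{u, u}) (M₀ M : Type u) [L.Structure M₀]
    [L.Structure M] : Prop :=
  ∃ σ : (n : ℕ) → (Fin (n + 1) → M₀) → M,
    ∀ (x : ℕ → M₀) (n : ℕ) (φ : L.Formula (Fin (n + 1))),
      φ.Realize (fun i : Fin (n + 1) => x i) ↔
        φ.Realize (fun i : Fin (n + 1) => σ (i : ℕ) (fun j : Fin ((i : ℕ) + 1) => x (j : ℕ)))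

/-- A position of the embedding game `G(M₀, M)`: a finite alternating sequence
`(x₀, y₀, x₁, y₁, …)` of elements of `M₀` and `M` (possibly ending after a move of player I,
so with `n ≤ m ≤ n + 1`), no proper initial segment of which of even length is an immediate
loss for player II (i.e., for every `k` with `2 * (k + 1) < m + n` and every formula
`φ(v₀, …, v_k)`, `M₀ ⊨ φ(x₀, …, x_k) ↔ M ⊨ φ(y₀, …, y_k)`). -/
structure GamePos (L : FirstOrder.Language.{u, u}) (M₀ M : Type u) [L.Structure M₀]
    [L.Structure M] where
  m : ℕ
  n : ℕ
  hnm : n ≤ m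
  hmn : m ≤ n + 1
  x : Fin m → M₀
  y : Fin n → M
  notLost : ∀ k : ℕ, (hk : 2 * (k + 1) < m + n) → ∀ φ : L.Formula (Fin (k + 1)),
    (φ.Realize fun i : Fin (k + 1) => x ⟨i, by have := i.isLt; omega⟩) ↔
      (φ.Realize fun i : Fin (k + 1) => y ⟨i, by have := i.isLt; omega⟩)

variable {L : FirstOrder.Language.{u, u}} {M₀ M : Type u} [L.Structure M₀] [L.Structure M]

/-- `p` is an initial segment of the position `q`. -/
def GamePos.Prefix (p q : GamePos L M₀ M) : Prop :=
  ∃ (hm : p.m ≤ q.m) (hn : p.n ≤ q.n),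
    (∀ i : Fin p.m, q.x ⟨i, lt_of_lt_of_le i.isLt hm⟩ = p.x i) ∧
    ∀ i : Fin p.n, q.y ⟨i, lt_of_lt_of_le i.isLt hn⟩ = p.y i

/-- `q` is the position `p⌢a` obtained by appending the player I move `a` to `p`. -/
def GamePos.ExtendI (p : GamePos L M₀ M) (a : M₀) (q : GamePos L M₀ M) : Prop :=
  p.Prefix q ∧ q.m = p.m + 1 ∧ q.n = p.n ∧ ∀ h : p.m < q.m, q.x ⟨p.m, h⟩ = a

/-- `q` is the position `p⌢b` obtained by appending the player II move `b` to `p`. -/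
def GamePos.ExtendII (p : GamePos L M₀ M) (b : M) (q : GamePos L M₀ M) : Prop :=
  p.Prefix q ∧ q.m = p.m ∧ q.n = p.n + 1 ∧ ∀ h : p.n < q.n, q.y ⟨p.n, h⟩ = b

/-- For a position `p` of odd length (`p.m = p.n + 1`) and a player II move `b`, the extended
sequence `p⌢b` is an immediate loss for player II: some formula `φ(v₀, …, v_{p.n})` is
realized by the `x`'s but not by the `y`'s (extended by `b`), or vice versa. -/
def GamePos.LossAfter (p : GamePos L M₀ M) (b : M) : Prop :=
  ∃ φ : L.Formula (Fin p.m),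
    ¬ (φ.Realize p.x ↔
        φ.Realize fun i : Fin p.m => if h : (i : ℕ) < p.n then p.y ⟨i, h⟩ else b)

/-!
The embedding game is open for player I: he wins as soon as player II makes an immediate loss.
Rank the positions from which player I can force such a loss by ordinals, as in the proof of the
Gale–Stewart theorem. If the empty position is unranked, player II wins by always replying so that
the position stays unranked. Otherwise the positions reached when player I always moves to a
position of smaller rank form a tree with the properties (i)–(iii): ranks strictly decrease along
its branches. Conversely, given such a tree, player II's winning strategy never makes an immediate
loss, so following it inside the tree produces an infinite branch.
-/

theorem FirstOrder.Language.Formula.realize_iff_of_forall_eq {α : Type u} [L.Structure α]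
    {k : ℕ} (φ : L.Formula (Fin k)) {v w : Fin k → α} (h : ∀ i, v i = w i) :
    φ.Realize v ↔ φ.Realize w := by
  rw [funext h]

theorem exists_seq_of_forall_exists {α : Type*} {P : α → Prop} {r : α → α → Prop} {a : α}
    (ha : P a) (h : ∀ x, P x → ∃ y, P y ∧ r x y) :
    ∃ f : ℕ → α, (∀ k, P (f k)) ∧ ∀ k, r (f k) (f (k + 1)) := by
  choose g hgP hgr using h
  let f : ℕ → {x // P x} := fun k => Nat.rec ⟨a, ha⟩ (fun _ x => ⟨g x.1 x.2, hgP _ _⟩) k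
  exact ⟨fun k => (f k).1, fun k => (f k).2, fun k => hgr _ _⟩

variable (L) in
def IsWinningStrategy (σ : (n : ℕ) → (Fin (n + 1) → M₀) → M) : Prop :=
  ∀ (x : ℕ → M₀) (n : ℕ) (φ : L.Formula (Fin (n + 1))),
    φ.Realize (fun i : Fin (n + 1) => x i) ↔
      φ.Realize (fun i : Fin (n + 1) => σ (i : ℕ) (fun j : Fin ((i : ℕ) + 1) => x (j : ℕ)))

namespace GamePos

theorem ext {p q : GamePos L M₀ M} (hm : p.m = q.m) (hn : p.n = q.n)
    (hx : ∀ i : Fin p.m, q.x ⟨i, hm ▸ i.isLt⟩ = p.x i)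
    (hy : ∀ i : Fin p.n, q.y ⟨i, hn ▸ i.isLt⟩ = p.y i) : p = q := by
  obtain ⟨m, n, _, _, x, y, _⟩ := p
  obtain ⟨m', n', _, _, x', y', _⟩ := q
  dsimp only at hm hn hx hy
  subst hm hn
  obtain rfl : x' = x := funext hx
  obtain rfl : y' = y := funext hy
  rfl

theorem m_le_and_n_le_of_add_le {p q : GamePos L M₀ M} (h : p.m + p.n ≤ q.m + q.n) :
    p.m ≤ q.m ∧ p.n ≤ q.n := by
  have := p.hnm; have := p.hmn; have := q.hnm; have := q.hmn
  omega

theorem Prefix.refl (p : GamePos L M₀ M) : p.Prefix p :=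
  ⟨le_rfl, le_rfl, fun _ => rfl, fun _ => rfl⟩

theorem Prefix.trans {p q r : GamePos L M₀ M} (hpq : p.Prefix q) (hqr : q.Prefix r) :
    p.Prefix r := by
  obtain ⟨hm, hn, hx, hy⟩ := hpq
  obtain ⟨hm', hn', hx', hy'⟩ := hqr
  exact ⟨hm.trans hm', hn.trans hn', fun i => (hx' ⟨i, i.isLt.trans_le hm⟩).trans (hx i),
    fun i => (hy' ⟨i, i.isLt.trans_le hn⟩).trans (hy i)⟩

theorem Prefix.of_prefix_of_add_le {p q r : GamePos L M₀ M} (hp : p.Prefix r) (hq : q.Prefix r)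
    (h : p.m + p.n ≤ q.m + q.n) : p.Prefix q := by
  obtain ⟨hm, hn⟩ := m_le_and_n_le_of_add_le h
  obtain ⟨_, _, hx, hy⟩ := hp
  obtain ⟨_, _, hx', hy'⟩ := hq
  exact ⟨hm, hn, fun i => (hx' ⟨i, i.isLt.trans_le hm⟩).symm.trans (hx i),
    fun i => (hy' ⟨i, i.isLt.trans_le hn⟩).symm.trans (hy i)⟩

theorem Prefix.eq_of_add_le {p q : GamePos L M₀ M} (hpq : p.Prefix q)
    (h : q.m + q.n ≤ p.m + p.n) : p = q := by
  obtain ⟨hm, hn⟩ := m_le_and_n_le_of_add_le h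
  obtain ⟨hm', hn', hx, hy⟩ := hpq
  exact ext (hm'.antisymm hm) (hn'.antisymm hn) hx hy

theorem Prefix.eq_or_prefix_of_add_eq_succ {p q r : GamePos L M₀ M} (hpq : p.Prefix q)
    (hq : q.m + q.n = p.m + p.n + 1) (hr : r.Prefix q) : r = q ∨ r.Prefix p := by
  by_cases h : r.m + r.n ≤ p.m + p.n
  · exact .inr (hr.of_prefix_of_add_le hpq h)
  · exact .inl (hr.eq_of_add_le (by omega))

def nil : GamePos L M₀ M where
  m := 0
  n := 0
  hnm := le_rfl
  hmn := zero_le_one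
  x := Fin.elim0
  y := Fin.elim0
  notLost _ hk := absurd hk (by omega)

theorem nil_prefix (p : GamePos L M₀ M) : nil.Prefix p :=
  ⟨Nat.zero_le _, Nat.zero_le _, fun i => i.elim0, fun i => i.elim0⟩

/-- Unlike `notLost`, this also covers the last completed round. -/
def Agree (p : GamePos L M₀ M) : Prop :=
  ∀ k (_ : k < p.n) (φ : L.Formula (Fin (k + 1))),
    (φ.Realize fun i : Fin (k + 1) => p.x ⟨i, by have := i.isLt; have := p.hnm; omega⟩) ↔
      φ.Realize fun i : Fin (k + 1) => p.y ⟨i, by have := i.isLt; omega⟩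

theorem agree_nil : (nil : GamePos L M₀ M).Agree :=
  fun _ hk => absurd hk (Nat.not_lt_zero _)

def playI (p : GamePos L M₀ M) (h : p.m = p.n) (hp : p.Agree) (a : M₀) : GamePos L M₀ M where
  m := p.m + 1
  n := p.n
  hnm := by omega
  hmn := by omega
  x i := if hi : (i : ℕ) < p.m then p.x ⟨i, hi⟩ else a
  y := p.y
  notLost k hk φ := (Formula.realize_iff_of_forall_eq φ fun i =>
    dif_pos (show (i : ℕ) < p.m by have := i.isLt; omega)).trans (hp k (by omega) φ)

def playII (p : GamePos L M₀ M) (h : p.m = p.n + 1) (b : M) : GamePos L M₀ M where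
  m := p.m
  n := p.n + 1
  hnm := by omega
  hmn := by omega
  x := p.x
  y i := if hi : (i : ℕ) < p.n then p.y ⟨i, hi⟩ else b
  notLost k hk φ := (p.notLost k (by omega) φ).trans <| Iff.symm <|
    Formula.realize_iff_of_forall_eq φ fun i =>
      dif_pos (show (i : ℕ) < p.n by have := i.isLt; omega)

theorem extendI_playI (p : GamePos L M₀ M) (h : p.m = p.n) (hp : p.Agree) (a : M₀) :
    p.ExtendI a (p.playI h hp a) :=
  ⟨⟨by simp [playI], le_rfl, fun i => dif_pos i.isLt, fun _ => rfl⟩, rfl, rfl,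
    fun _ => dif_neg (lt_irrefl _)⟩

theorem extendII_playII (p : GamePos L M₀ M) (h : p.m = p.n + 1) (b : M) :
    p.ExtendII b (p.playII h b) :=
  ⟨⟨le_rfl, by simp [playII], fun _ => rfl, fun i => dif_pos i.isLt⟩, rfl, rfl,
    fun _ => dif_neg (lt_irrefl _)⟩

theorem agree_playII_of_not_lossAfter {p : GamePos L M₀ M} (h : p.m = p.n + 1) {b : M}
    (hb : ¬ p.LossAfter b) : (p.playII h b).Agree := by
  revert hb
  obtain ⟨m, n, -, -, x, y, notLost⟩ := p
  dsimp only at h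
  subst h
  intro hb k hk φ
  rcases (show k < n ∨ k = n by simp only [playII] at hk; omega) with hk | rfl
  · exact (notLost k (by omega) φ).trans <| Iff.symm <|
      Formula.realize_iff_of_forall_eq φ fun i =>
        dif_pos (show (i : ℕ) < n by have := i.isLt; omega)
  · by_contra hφ
    exact hb ⟨φ, hφ⟩

/-- From `p`, player I can force an immediate loss of player II, and `o` bounds the ordinal rank of
this win. -/
inductive IWinsBy : GamePos L M₀ M → Ordinal.{u} → Prop
  | playI {p : GamePos L M₀ M} {o o' : Ordinal.{u}} (h : p.m = p.n) (hp : p.Agree) (a : M₀)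
      (ho : o' < o) (hw : (p.playI h hp a).IWinsBy o') : p.IWinsBy o
  | playII {p : GamePos L M₀ M} {o : Ordinal.{u}} (h : p.m = p.n + 1) (o' : M → Ordinal.{u})
      (ho : ∀ b, o' b < o) (hw : ∀ b, ¬ p.LossAfter b → (p.playII h b).IWinsBy (o' b)) :
      p.IWinsBy o

def IWins (p : GamePos L M₀ M) : Prop :=
  ∃ o, p.IWinsBy o

noncomputable def winRank (p : GamePos L M₀ M) : Ordinal.{u} :=
  sInf {o | p.IWinsBy o}

theorem IWins.iWinsBy_winRank {p : GamePos L M₀ M} (hw : p.IWins) : p.IWinsBy p.winRank :=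
  csInf_mem (show {o | p.IWinsBy o}.Nonempty from hw)

theorem winRank_le {p : GamePos L M₀ M} {o : Ordinal.{u}} (hw : p.IWinsBy o) : p.winRank ≤ o :=
  csInf_le' hw

theorem IWins.of_playI {p : GamePos L M₀ M} (h : p.m = p.n) (hp : p.Agree) (a : M₀)
    (hw : (p.playI h hp a).IWins) : p.IWins :=
  let ⟨o, ho⟩ := hw
  ⟨o + 1, .playI h hp a (lt_add_one o) ho⟩

theorem IWins.of_playII {p : GamePos L M₀ M} (h : p.m = p.n + 1)
    (hw : ∀ b, p.LossAfter b ∨ (p.playII h b).IWins) : p.IWins := by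
  obtain ⟨c, hc⟩ := Ordinal.bddAbove_of_small (s := range fun b => (p.playII h b).winRank)
  refine ⟨c + 1, .playII h (fun b => (p.playII h b).winRank)
    (fun b => (hc (mem_range_self b)).trans_lt (lt_add_one c))
    fun b hb => ((hw b).resolve_left hb).iWinsBy_winRank⟩

theorem IWins.exists_playI {p : GamePos L M₀ M} (hw : p.IWins) (h : p.m = p.n) :
    ∃ hp a, (p.playI h hp a).IWins ∧ (p.playI h hp a).winRank < p.winRank := by
  generalize ho : p.winRank = o
  have hwo : p.IWinsBy o := ho ▸ hw.iWinsBy_winRank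
  cases hwo with
  | playI _ hp a ho' hw' => exact ⟨hp, a, ⟨_, hw'⟩, (winRank_le hw').trans_lt ho'⟩
  | playII h' _ => omega

theorem IWins.playII {p : GamePos L M₀ M} (hw : p.IWins) (h : p.m = p.n + 1) (b : M) :
    p.LossAfter b ∨ (p.playII h b).IWins ∧ (p.playII h b).winRank < p.winRank := by
  generalize ho : p.winRank = o
  have hwo : p.IWinsBy o := ho ▸ hw.iWinsBy_winRank
  cases hwo with
  | playI h' => omega
  | playII _ o' ho' hw' =>
    refine or_iff_not_imp_left.2 fun hb => ⟨⟨_, hw' b hb⟩, ?_⟩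
    exact (winRank_le (hw' b hb)).trans_lt (ho' b)

def playRound (p : GamePos L M₀ M) (h : p.m = p.n) (hp : p.Agree) (a : M₀) (b : M) :
    GamePos L M₀ M :=
  (p.playI h hp a).playII (congrArg (· + 1) h) b

theorem prefix_playRound (p : GamePos L M₀ M) (h : p.m = p.n) (hp : p.Agree) (a : M₀) (b : M) :
    p.Prefix (p.playRound h hp a b) :=
  (p.extendI_playI h hp a).1.trans ((p.playI h hp a).extendII_playII _ b).1

def IsSafe (p : GamePos L M₀ M) : Prop :=
  p.m = p.n ∧ p.Agree ∧ ¬ p.IWins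

theorem IsSafe.exists_playRound {p : GamePos L M₀ M} (hp : p.IsSafe) (a : M₀) :
    ∃ b, (p.playRound hp.1 hp.2.1 a b).IsSafe := by
  by_contra! H
  refine hp.2.2 <| IWins.of_playI hp.1 hp.2.1 a <|
    IWins.of_playII (congrArg (· + 1) hp.1) fun b => ?_
  refine or_iff_not_imp_left.2 fun hb => not_not.1 fun hw => H b ?_
  exact ⟨congrArg (· + 1) hp.1, agree_playII_of_not_lossAfter _ hb, hw⟩

noncomputable def safeStep (p : {p : GamePos L M₀ M // p.IsSafe}) (a : M₀) :
    {p : GamePos L M₀ M // p.IsSafe} :=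
  ⟨_, (p.2.exists_playRound a).choose_spec⟩

theorem prefix_safeStep (p : {p : GamePos L M₀ M // p.IsSafe}) (a : M₀) :
    p.1.Prefix (safeStep p a).1 :=
  prefix_playRound ..

noncomputable def safeRun (hnil : ¬ (nil : GamePos L M₀ M).IWins) (x : ℕ → M₀) :
    ℕ → {p : GamePos L M₀ M // p.IsSafe}
  | 0 => ⟨nil, rfl, agree_nil, hnil⟩
  | k + 1 => safeStep (safeRun hnil x k) (x k)

variable {hnil : ¬ (nil : GamePos L M₀ M).IWins}

theorem safeRun_n (x : ℕ → M₀) (k : ℕ) : (safeRun hnil x k).1.n = k := by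
  induction k with
  | zero => rfl
  | succ k ih => exact congrArg (· + 1) ih

theorem safeRun_x (x : ℕ → M₀) (k i : ℕ) (hi : i < (safeRun hnil x k).1.m) :
    (safeRun hnil x k).1.x ⟨i, hi⟩ = x i := by
  induction k with
  | zero => exact absurd hi (Nat.not_lt_zero i)
  | succ k ih =>
    show dite (i < _) _ _ = _
    split_ifs with hik
    · exact ih hik
    · have hm : (safeRun hnil x k).1.m = k := (safeRun hnil x k).2.1.trans (safeRun_n x k)
      obtain rfl : i = k := by change i < (safeRun hnil x k).1.m + 1 at hi; omega
      rfl

theorem safeRun_prefix (x : ℕ → M₀) {k l : ℕ} (hkl : k ≤ l) :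
    (safeRun hnil x k).1.Prefix (safeRun hnil x l).1 := by
  induction l, hkl using Nat.le_induction with
  | base => exact .refl _
  | succ l _ ih => exact ih.trans (prefix_safeStep ..)

theorem safeRun_congr {x x' : ℕ → M₀} {k : ℕ} (h : ∀ i < k, x i = x' i) :
    safeRun hnil x k = safeRun hnil x' k := by
  induction k with
  | zero => rfl
  | succ k ih =>
    simp only [safeRun, ih fun i hi => h i (by omega), h k (by omega)]

noncomputable def safeStrategy (hnil : ¬ (nil : GamePos L M₀ M).IWins) (n : ℕ)
    (v : Fin (n + 1) → M₀) : M :=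
  (safeRun hnil (fun i => if h : i < n + 1 then v ⟨i, h⟩ else v 0) (n + 1)).1.y
    ⟨n, by rw [safeRun_n]; omega⟩

theorem safeStrategy_eq (x : ℕ → M₀) {i n : ℕ} (hin : i ≤ n) :
    safeStrategy hnil i (fun j : Fin (i + 1) => x j) =
      (safeRun hnil x (n + 1)).1.y ⟨i, by rw [safeRun_n]; omega⟩ := by
  have e : safeRun hnil (fun j => if h : j < i + 1 then x j else x (0 : Fin (i + 1))) (i + 1) =
      safeRun hnil x (i + 1) :=
    safeRun_congr fun j hj => dif_pos hj
  obtain ⟨_, _, -, hy⟩ := e ▸ safeRun_prefix (hnil := hnil) x (show i + 1 ≤ n + 1 by omega)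
  exact (hy ⟨i, by rw [safeRun_n]; omega⟩).symm

theorem isWinningStrategy_safeStrategy : IsWinningStrategy L (safeStrategy hnil) := by
  intro x n φ
  have hagree := (safeRun hnil x (n + 1)).2.2.1 n (by rw [safeRun_n]; omega) φ
  refine (Formula.realize_iff_of_forall_eq φ fun i => ?_).trans
    (hagree.trans (Formula.realize_iff_of_forall_eq φ fun i => ?_))
  · exact (safeRun_x x _ i _).symm
  · exact (safeStrategy_eq x (by omega)).symm

/-- The tree of player I's rank-decreasing winning strategy. -/
inductive InWinningTree : GamePos L M₀ M → Prop
  | root : (nil : GamePos L M₀ M).IWins → InWinningTree nil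
  | step {p q : GamePos L M₀ M} : InWinningTree p → p.Prefix q → q.m + q.n = p.m + p.n + 1 →
      q.IWins → q.winRank < p.winRank → InWinningTree q

namespace InWinningTree

theorem iWins {p : GamePos L M₀ M} (hp : p.InWinningTree) : p.IWins := by
  cases hp with
  | root hw => exact hw
  | step _ _ _ hw => exact hw

theorem of_prefix {p q : GamePos L M₀ M} (hq : q.InWinningTree) (hpq : p.Prefix q) :
    p.InWinningTree := by
  induction hq with
  | root hw => exact (hpq.eq_of_add_le (Nat.zero_le _)) ▸ root hw
  | step hp hpre hlen hw hlt ih =>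
    rcases hpre.eq_or_prefix_of_add_eq_succ hlen hpq with rfl | hpq
    · exact step hp hpre hlen hw hlt
    · exact ih hpq

theorem winRank_lt {p q : GamePos L M₀ M} (hq : q.InWinningTree) (hpq : p.Prefix q)
    (hlt : p.m + p.n < q.m + q.n) : q.winRank < p.winRank := by
  induction hq with
  | root => simp [nil] at hlt
  | @step r q _ hrq hlen _ hrank ih =>
    have hpr : p.Prefix r := hpq.of_prefix_of_add_le hrq (by omega)
    rcases (show p.m + p.n < r.m + r.n ∨ r.m + r.n ≤ p.m + p.n by omega) with h | h
    · exact hrank.trans (ih hpr h)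
    · exact hpr.eq_of_add_le h ▸ hrank

theorem exists_extendI {p : GamePos L M₀ M} (hp : p.InWinningTree) (h : p.m = p.n) :
    ∃ a q, q.InWinningTree ∧ p.ExtendI a q := by
  obtain ⟨hagree, a, hw, hlt⟩ := hp.iWins.exists_playI h
  have hext := p.extendI_playI h hagree a
  exact ⟨a, _, step hp hext.1 (by rw [hext.2.1, hext.2.2.1]; omega) hw hlt, hext⟩

theorem lossAfter_or_exists_extendII {p : GamePos L M₀ M} (hp : p.InWinningTree)
    (h : p.m = p.n + 1) (b : M) : p.LossAfter b ∨ ∃ q, q.InWinningTree ∧ p.ExtendII b q := by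
  refine (hp.iWins.playII h b).imp_right fun ⟨hw, hlt⟩ => ?_
  have hext := p.extendII_playII h b
  exact ⟨_, step hp hext.1 (by rw [hext.2.1, hext.2.2.1]; omega) hw hlt, hext⟩

theorem not_exists_branch : ¬ ∃ f : ℕ → GamePos L M₀ M, (∀ k, (f k).InWinningTree) ∧
    ∀ k, (f k).Prefix (f (k + 1)) ∧ (f k).m + (f k).n < (f (k + 1)).m + (f (k + 1)).n :=
  fun ⟨f, hf, hchain⟩ => not_strictAnti_of_wellFoundedLT (fun k => (f k).winRank)
    (strictAnti_nat_of_succ_lt fun k => (hf (k + 1)).winRank_lt (hchain k).1 (hchain k).2)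

end InWinningTree

def FollowsStrategy (σ : (n : ℕ) → (Fin (n + 1) → M₀) → M) (p : GamePos L M₀ M) : Prop :=
  ∀ i : Fin p.n, p.y i = σ i fun j : Fin (i + 1) =>
    p.x ⟨j, by have := j.isLt; have := i.isLt; have := p.hnm; omega⟩

section FollowsStrategy

variable {σ : (n : ℕ) → (Fin (n + 1) → M₀) → M} {p q : GamePos L M₀ M}

theorem followsStrategy_nil : (nil : GamePos L M₀ M).FollowsStrategy σ :=
  fun i => i.elim0

theorem FollowsStrategy.y_eq_of_prefix (hp : p.FollowsStrategy σ) (hpq : p.Prefix q) {i : ℕ}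
    (hi : i < p.n) :
    q.y ⟨i, hi.trans_le hpq.2.1⟩ = σ i fun j : Fin (i + 1) =>
      q.x ⟨j, by have := j.isLt; have := p.hnm; have := hpq.1; omega⟩ := by
  obtain ⟨_, _, hx, hy⟩ := hpq
  rw [hy ⟨i, hi⟩, hp ⟨i, hi⟩]
  congr 1
  funext j
  exact (hx ⟨j, _⟩).symm

theorem FollowsStrategy.of_extendI (hp : p.FollowsStrategy σ) {a : M₀} (hq : p.ExtendI a q) :
    q.FollowsStrategy σ :=
  fun i => hp.y_eq_of_prefix hq.1 (hq.2.2.1 ▸ i.isLt)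

theorem FollowsStrategy.of_extendII (hp : p.FollowsStrategy σ) (h : p.m = p.n + 1)
    (hq : p.ExtendII (σ p.n fun j => p.x ⟨j, by omega⟩) q) : q.FollowsStrategy σ := by
  rintro ⟨i, hi⟩
  obtain ⟨hpq, -, hn, hlast⟩ := hq
  rcases (show i < p.n ∨ i = p.n by omega) with hi' | rfl
  · exact hp.y_eq_of_prefix hpq hi'
  · obtain ⟨_, _, hx, -⟩ := hpq
    rw [hlast (by omega)]
    congr 1
    funext j
    exact (hx ⟨j, _⟩).symm

theorem FollowsStrategy.not_lossAfter (hσ : IsWinningStrategy L σ) (hp : p.FollowsStrategy σ)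
    (h : p.m = p.n + 1) : ¬ p.LossAfter (σ p.n fun j => p.x ⟨j, by omega⟩) := by
  revert hp
  obtain ⟨m, n, -, -, x, y, -⟩ := p
  dsimp only at h
  subst h
  rintro hp ⟨φ, hφ⟩
  apply hφ
  let x' : ℕ → M₀ := fun k => if hk : k < n + 1 then x ⟨k, hk⟩ else x 0
  have hx' : ∀ k (hk : k < n + 1), x' k = x ⟨k, hk⟩ := fun k hk => dif_pos hk
  refine (Formula.realize_iff_of_forall_eq φ fun i => (hx' i i.isLt).symm).trans
    ((hσ x' n φ).trans (Formula.realize_iff_of_forall_eq φ fun i => ?_))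
  obtain ⟨i, hi⟩ := i
  show _ = dite (i < n) _ _
  split_ifs with hin
  · rw [hp ⟨i, hin⟩]
    congr 1
    funext j
    exact hx' _ _
  · obtain rfl : i = n := by change i < n + 1 at hi; omega
    congr 1
    funext j
    exact hx' _ _

variable {S : Set (GamePos L M₀ M)}

theorem exists_extension_followsStrategy
    (hI : ∀ p ∈ S, p.m = p.n → ∃ a : M₀, ∃ q ∈ S, p.ExtendI a q)
    (hII : ∀ p ∈ S, p.m = p.n + 1 → ∀ b : M, p.LossAfter b ∨ ∃ q ∈ S, p.ExtendII b q)
    (hσ : IsWinningStrategy L σ) (hpS : p ∈ S) (hp : p.FollowsStrategy σ) :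
    ∃ q, (q ∈ S ∧ q.FollowsStrategy σ) ∧ p.Prefix q ∧ p.m + p.n < q.m + q.n := by
  rcases (show p.m = p.n ∨ p.m = p.n + 1 by have := p.hnm; have := p.hmn; omega) with h | h
  · obtain ⟨a, q, hqS, hq⟩ := hI p hpS h
    exact ⟨q, ⟨hqS, hp.of_extendI hq⟩, hq.1, by rw [hq.2.1, hq.2.2.1]; omega⟩
  · rcases hII p hpS h (σ p.n fun j => p.x ⟨j, by omega⟩) with hl | ⟨q, hqS, hq⟩
    · exact absurd hl (hp.not_lossAfter hσ h)
    · exact ⟨q, ⟨hqS, hp.of_extendII h hq⟩, hq.1, by rw [hq.2.1, hq.2.2.1]; omega⟩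

theorem exists_branch_of_isWinningStrategy
    (hI : ∀ p ∈ S, p.m = p.n → ∃ a : M₀, ∃ q ∈ S, p.ExtendI a q)
    (hII : ∀ p ∈ S, p.m = p.n + 1 → ∀ b : M, p.LossAfter b ∨ ∃ q ∈ S, p.ExtendII b q)
    (hσ : IsWinningStrategy L σ) (hnil : nil ∈ S) :
    ∃ f : ℕ → GamePos L M₀ M, (∀ k, f k ∈ S) ∧
      ∀ k, (f k).Prefix (f (k + 1)) ∧ (f k).m + (f k).n < (f (k + 1)).m + (f (k + 1)).n :=
  let ⟨f, hf, hchain⟩ :=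
    exists_seq_of_forall_exists (P := fun q => q ∈ S ∧ q.FollowsStrategy σ)
      ⟨hnil, followsStrategy_nil⟩ fun _ ⟨hpS, hp⟩ =>
        exists_extension_followsStrategy hI hII hσ hpS hp
  ⟨f, fun k => (hf k).1, hchain⟩

end FollowsStrategy

end GamePos

/-- Player II has no winning strategy in the embedding game `G(M₀, M)` if and only if there is
a nonempty set `S` of positions, closed under initial segments, such that: (i) every position
in `S` of even length has an extension by some player I move lying in `S`; (ii) for every
position in `S` of odd length and every player II move `b`, either appending `b` gives an
immediate loss for player II or the extended position lies in `S`; and (iii) `S` is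
wellfounded, i.e., `S` has no infinite branch. -/
theorem not_genericEmbeddable_iff_exists_wellfounded_tree
    (L : FirstOrder.Language.{u, u}) (M₀ M : Type u) [L.Structure M₀] [L.Structure M] :
    ¬ IsGenericEmbeddable L M₀ M ↔
      ∃ S : Set (GamePos L M₀ M),
        S.Nonempty ∧
        (∀ q ∈ S, ∀ p : GamePos L M₀ M, p.Prefix q → p ∈ S) ∧
        (∀ p ∈ S, p.m = p.n → ∃ a : M₀, ∃ q ∈ S, p.ExtendI a q) ∧
        (∀ p ∈ S, p.m = p.n + 1 → ∀ b : M, p.LossAfter b ∨ ∃ q ∈ S, p.ExtendII b q) ∧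
        ¬ ∃ f : ℕ → GamePos L M₀ M, (∀ k, f k ∈ S) ∧
            ∀ k, (f k).Prefix (f (k + 1)) ∧
              (f k).m + (f k).n < (f (k + 1)).m + (f (k + 1)).n := by
  constructor
  · intro hng
    have hnil : (GamePos.nil : GamePos L M₀ M).IWins := by
      by_contra hnil
      exact hng ⟨_, GamePos.isWinningStrategy_safeStrategy (hnil := hnil)⟩
    exact ⟨{q | q.InWinningTree}, ⟨_, .root hnil⟩, fun q hq p hpq => hq.of_prefix hpq,
      fun p hp h => hp.exists_extendI h, fun p hp h b => hp.lossAfter_or_exists_extendII h b,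
      GamePos.InWinningTree.not_exists_branch⟩
  · rintro ⟨S, ⟨p, hp⟩, hclosed, hI, hII, hwf⟩ ⟨σ, hσ⟩
    exact hwf (GamePos.exists_branch_of_isWinningStrategy hI hII hσ (hclosed p hp _ p.nil_prefix))
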